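/- Let h : ℂ → ℂ, α ∈ ℂ, and define h_α(z) = h(z)·e^{αz}. Then for all integers n ≥ 2, 1 ≤ k ≤ n−1, all β > 0 and all x ∈ ℝⁿ, S_{n,k}(h_α, β, x) = e^{−iαβ·k(n−k)} · S_{n,k}(h, β, x). Consequently, if h satisfies the Ruijsenaars functional equation for (n, k, β), then so does h_α for every α ∈ ℂ. -/
import Mathlib


/-- The Ruijsenaars sum `S_{n,k}(h, β, x)`. -/
noncomputable def ruijSum (h : ℂ → ℂ) (n k : ℕ) (β : ℝ) (x : Fin n → ℝ) : ℂ :=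
  ∑ I ∈ Finset.powersetCard k (Finset.univ : Finset (Fin n)),
    ((∏ i ∈ I, ∏ j ∈ Iᶜ, h ((x j : ℂ) - (x i : ℂ)) *
        h ((x i : ℂ) - (x j : ℂ) - Complex.I * (β : ℂ))) -
     (∏ i ∈ I, ∏ j ∈ Iᶜ, h ((x i : ℂ) - (x j : ℂ)) *
        h ((x j : ℂ) - (x i : ℂ) - Complex.I * (β : ℂ))))

lemma ruij_prod_aux {n : ℕ} (I : Finset (Fin n)) (α : ℂ) (β : ℝ)
    (a b : Fin n → Fin n → ℂ) (hab : ∀ i j, a i j + b i j = -Complex.I * β)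
    (h : ℂ → ℂ) :
    (∏ i ∈ I, ∏ j ∈ Iᶜ, (h (a i j) * Complex.exp (α * a i j)) *
        (h (b i j) * Complex.exp (α * b i j))) =
      Complex.exp (-Complex.I * α * β) ^ (I.card * Iᶜ.card) *
        ∏ i ∈ I, ∏ j ∈ Iᶜ, h (a i j) * h (b i j) := by
  have step : ∀ i j, (h (a i j) * Complex.exp (α * a i j)) *
      (h (b i j) * Complex.exp (α * b i j)) =
      Complex.exp (-Complex.I * α * β) * (h (a i j) * h (b i j)) := by
    intro i j
    rw [mul_mul_mul_comm, ← Complex.exp_add]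
    have : α * a i j + α * b i j = -Complex.I * α * β := by
      rw [← mul_add, hab]; ring
    rw [this]; ring
  calc (∏ i ∈ I, ∏ j ∈ Iᶜ, (h (a i j) * Complex.exp (α * a i j)) *
      (h (b i j) * Complex.exp (α * b i j)))
      = ∏ i ∈ I, ∏ j ∈ Iᶜ, Complex.exp (-Complex.I * α * β) * (h (a i j) * h (b i j)) := by
        exact Finset.prod_congr rfl fun i _ => Finset.prod_congr rfl fun j _ => step i j
    _ = _ := by
        simp only [Finset.prod_mul_distrib, Finset.prod_const, ← pow_mul]
        rw [Nat.mul_comm]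

/-- For `h_α(z) = h(z)·e^{αz}` one has
`S_{n,k}(h_α, β, x) = e^{−iαβ·k(n−k)} · S_{n,k}(h, β, x)`; consequently if `h`
satisfies the Ruijsenaars functional equation for `(n,k,β)` then so does `h_α`. -/
theorem ruijSum_exp_mul (h : ℂ → ℂ) (α : ℂ) (n k : ℕ) (hn : 2 ≤ n) (hk1 : 1 ≤ k)
    (hk2 : k ≤ n - 1) (β : ℝ) (hβ : 0 < β) :
    (∀ x : Fin n → ℝ,
      ruijSum (fun z => h z * Complex.exp (α * z)) n k β x =
        Complex.exp (-Complex.I * α * (β : ℂ) * ((k * (n - k) : ℕ) : ℂ)) *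
          ruijSum h n k β x) ∧
    ((∀ x : Fin n → ℝ, Function.Injective x → ruijSum h n k β x = 0) →
      ∀ x : Fin n → ℝ, Function.Injective x →
        ruijSum (fun z => h z * Complex.exp (α * z)) n k β x = 0) := by
  have main : ∀ x : Fin n → ℝ,
      ruijSum (fun z => h z * Complex.exp (α * z)) n k β x =
        Complex.exp (-Complex.I * α * (β : ℂ) * ((k * (n - k) : ℕ) : ℂ)) *
          ruijSum h n k β x := by
    intro x
    unfold ruijSum
    rw [Finset.mul_sum]
    apply Finset.sum_congr rfl
    intro I hI
    rw [Finset.mem_powersetCard_univ] at hI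
    have hc : Iᶜ.card = n - k := by
      rw [Finset.card_compl, hI, Fintype.card_fin]
    have hexp : Complex.exp (-Complex.I * α * (β : ℂ) * ((k * (n - k) : ℕ) : ℂ)) =
        Complex.exp (-Complex.I * α * β) ^ (I.card * Iᶜ.card) := by
      rw [hI, hc, ← Complex.exp_nat_mul]
      congr 1
      push_cast
      ring
    rw [mul_sub, hexp,
      ruij_prod_aux I α β (fun i j => (x j : ℂ) - (x i : ℂ))
        (fun i j => (x i : ℂ) - (x j : ℂ) - Complex.I * (β : ℂ))
        (fun i j => by ring) h,
      ruij_prod_aux I α β (fun i j => (x i : ℂ) - (x j : ℂ))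
        (fun i j => (x j : ℂ) - (x i : ℂ) - Complex.I * (β : ℂ))
        (fun i j => by ring) h]
  refine ⟨main, fun hz x hx => ?_⟩
  rw [main x, hz x hx, mul_zero]
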